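/- For every δ ∈ (0,1) and R > 0 there exists a constant c > 0, depending only on γ, δ, R and h, with the following property. Let f be a probability density on ℝ³ lying in W^{1,1}_loc(ℝ³) with f > 0 a.e., and define J₁(f) := Σ_{k=1}^3 ∫∫_{ℝ³×ℝ³} f(v) f(w) ᾱ(|v−w|) |v−w|^{−2} ( b_k(v−w)·∇log f(v) )⁴ dv dw. Then for all δ-non-aligned points v₁, v₂, v₃ ∈ B(0,R): J₁(f) ≥ c · ( min_{k∈{1,2,3}} ∫_{ℝ³} h( (w−v_k)/δ ) f(w) dw ) · ∫_{ℝ³} f(v) ⟨v⟩^{γ−2} |∇log f(v)|⁴ dv. -/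

import Mathlib

/- STATEMENT 5:
For every δ ∈ (0,1) and R > 0 there is c > 0 depending only on γ, δ, R and h such that
for every probability density f ∈ W^{1,1}_loc(ℝ³) with f > 0 a.e. (with weak gradient g,
so that ∇log f = g/f) and all δ-non-aligned points v₁,v₂,v₃ ∈ B(0,R):
  J₁(f) ≥ c (min_k ∫ h((w−v_k)/δ) f(w) dw) ∫ f(v) ⟨v⟩^{γ−2} |∇log f(v)|⁴ dv. -/

open MeasureTheory Real Set Metric
open scoped RealInnerProductSpace ENNReal

noncomputable section

def cross3 (u v : EuclideanSpace ℝ (Fin 3)) : EuclideanSpace ℝ (Fin 3) :=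
  WithLp.toLp 2 ![u 1 * v 2 - u 2 * v 1, u 2 * v 0 - u 0 * v 2, u 0 * v 1 - u 1 * v 0]

def bkv (k : Fin 3) (z : EuclideanSpace ℝ (Fin 3)) : EuclideanSpace ℝ (Fin 3) :=
  cross3 (EuclideanSpace.single k 1) z

def projPerp (u x : EuclideanSpace ℝ (Fin 3)) : EuclideanSpace ℝ (Fin 3) :=
  (Submodule.orthogonalProjection (Submodule.span ℝ {u})ᗮ x : EuclideanSpace ℝ (Fin 3))

def DeltaNonAligned (δ : ℝ) (v₁ v₂ v₃ : EuclideanSpace ℝ (Fin 3)) : Prop :=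
  6 * Real.sqrt δ ≤ ‖v₂ - v₁‖ ∧
  24 * δ + 2 * Real.sqrt δ * ‖v₃ - v₁‖ ≤ ‖projPerp (v₂ - v₁) (v₃ - v₁)‖

lemma inner_bkv0 (z ξ : EuclideanSpace ℝ (Fin 3)) :
    ⟪bkv 0 z, ξ⟫ = -(z 2) * ξ 1 + z 1 * ξ 2 := by
  simp [bkv, cross3, PiLp.inner_apply, RCLike.inner_apply, Fin.sum_univ_three,
    EuclideanSpace.single_apply]
  ring

lemma inner_bkv1 (z ξ : EuclideanSpace ℝ (Fin 3)) :
    ⟪bkv 1 z, ξ⟫ = z 2 * ξ 0 - z 0 * ξ 2 := by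
  simp [bkv, cross3, PiLp.inner_apply, RCLike.inner_apply, Fin.sum_univ_three,
    EuclideanSpace.single_apply]
  ring

lemma inner_bkv2 (z ξ : EuclideanSpace ℝ (Fin 3)) :
    ⟪bkv 2 z, ξ⟫ = -(z 1) * ξ 0 + z 0 * ξ 1 := by
  simp [bkv, cross3, PiLp.inner_apply, RCLike.inner_apply, Fin.sum_univ_three,
    EuclideanSpace.single_apply]
  ring

lemma lagrange (z ξ : EuclideanSpace ℝ (Fin 3)) :
    ⟪bkv 0 z, ξ⟫^2 + ⟪bkv 1 z, ξ⟫^2 + ⟪bkv 2 z, ξ⟫^2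
      = ‖z‖^2 * ‖ξ‖^2 - ⟪z, ξ⟫^2 := by
  rw [inner_bkv0, inner_bkv1, inner_bkv2, EuclideanSpace.norm_sq_eq,
    EuclideanSpace.norm_sq_eq]
  simp [PiLp.inner_apply, RCLike.inner_apply, Fin.sum_univ_three]
  ring

/-- orthogonal rejection along a unit vector, as a plain map -/
def Qe (e x : EuclideanSpace ℝ (Fin 3)) : EuclideanSpace ℝ (Fin 3) := x - ⟪x, e⟫ • e

lemma Qe_norm_sq (e x : EuclideanSpace ℝ (Fin 3)) (he : ‖e‖ = 1) :
    ‖Qe e x‖^2 = ‖x‖^2 - ⟪x, e⟫^2 := by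
  have h1 : ⟪x, ⟪x,e⟫ • e⟫ = ⟪x,e⟫^2 := by rw [real_inner_smul_right]; ring
  have h2 : ‖⟪x,e⟫ • e‖^2 = ⟪x,e⟫^2 := by
    rw [norm_smul, mul_pow, he, Real.norm_eq_abs, sq_abs]; ring
  rw [Qe, @norm_sub_sq_real, h1, h2]; ring

lemma Qe_norm_le (e x : EuclideanSpace ℝ (Fin 3)) (he : ‖e‖ = 1) : ‖Qe e x‖ ≤ ‖x‖ := by
  have h := Qe_norm_sq e x he
  nlinarith [norm_nonneg (Qe e x), norm_nonneg x, sq_nonneg (⟪x, e⟫)]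

lemma Qe_sub (e a b : EuclideanSpace ℝ (Fin 3)) : Qe e (a - b) = Qe e a - Qe e b := by
  simp only [Qe, inner_sub_left, sub_smul]
  abel

lemma projPerp_eq (u x : EuclideanSpace ℝ (Fin 3)) (hu : u ≠ 0) :
    projPerp u x = Qe (‖u‖⁻¹ • u) x := by
  unfold projPerp
  rw [← Submodule.starProjection_apply, Submodule.starProjection_orthogonal_val,
    Submodule.starProjection_singleton, Qe]
  have h1 : ‖u‖ ≠ 0 := norm_ne_zero_iff.mpr hu
  congr 1
  rw [real_inner_smul_right, smul_smul, real_inner_comm]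
  norm_cast
  congr 1
  field_simp
  simp

lemma Qe_smul (e : EuclideanSpace ℝ (Fin 3)) (c : ℝ) (a : EuclideanSpace ℝ (Fin 3)) :
    Qe e (c • a) = c • Qe e a := by
  simp only [Qe, real_inner_smul_left, smul_sub, smul_smul]

lemma norm_eq_of_sq_eq {a b : ℝ} (ha : 0 ≤ a) (hb : 0 ≤ b) (h : a^2 = b^2) : a = b := by
  nlinarith

lemma exists_far {δ : ℝ} (hδ : 0 < δ) (e v v₁ v₂ v₃ : EuclideanSpace ℝ (Fin 3))
    (he : ‖e‖ = 1) (hna : DeltaNonAligned δ v₁ v₂ v₃) :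
    2*δ ≤ ‖Qe e (v₁ - v)‖ ∨ 2*δ ≤ ‖Qe e (v₂ - v)‖ ∨ 2*δ ≤ ‖Qe e (v₃ - v)‖ := by
  by_contra hcon
  push_neg at hcon
  obtain ⟨h1, h2, h3⟩ := hcon
  obtain ⟨hna1, hna2⟩ := hna
  set u := v₂ - v₁ with hu_def
  set x := v₃ - v₁ with hx_def
  have hsδ : 0 < Real.sqrt δ := Real.sqrt_pos.mpr hδ
  have hδδ : Real.sqrt δ * Real.sqrt δ = δ := Real.mul_self_sqrt hδ.le
  have hunorm : 0 < ‖u‖ := lt_of_lt_of_le (by positivity) hna1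
  have hu0 : u ≠ 0 := norm_pos_iff.mp hunorm
  set e' : EuclideanSpace ℝ (Fin 3) := ‖u‖⁻¹ • u with he'_def
  have he' : ‖e'‖ = 1 := by
    rw [he'_def, norm_smul, norm_inv, norm_norm, inv_mul_cancel₀ hunorm.ne']
  -- ‖Qe e u‖ ≤ 4δ
  have hQu : ‖Qe e u‖ ≤ 4*δ := by
    have : u = (v₂ - v) - (v₁ - v) := by rw [hu_def]; abel
    rw [this, Qe_sub]
    calc ‖Qe e (v₂ - v) - Qe e (v₁ - v)‖ ≤ ‖Qe e (v₂ - v)‖ + ‖Qe e (v₁ - v)‖ :=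
          norm_sub_le _ _
      _ ≤ 4*δ := by linarith
  have hQx4 : ‖Qe e x‖ ≤ 4*δ := by
    have : x = (v₃ - v) - (v₁ - v) := by rw [hx_def]; abel
    rw [this, Qe_sub]
    calc ‖Qe e (v₃ - v) - Qe e (v₁ - v)‖ ≤ ‖Qe e (v₃ - v)‖ + ‖Qe e (v₁ - v)‖ :=
          norm_sub_le _ _
      _ ≤ 4*δ := by linarith
  -- ‖Qe e e'‖ ≤ (2/3)√δ
  have hQe' : ‖Qe e e'‖ ≤ (2/3) * Real.sqrt δ := by
    rw [he'_def, Qe_smul, norm_smul, norm_inv, norm_norm]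
    have h6 : (0:ℝ) < 6 * Real.sqrt δ := by positivity
    have : ‖u‖⁻¹ ≤ (6 * Real.sqrt δ)⁻¹ := inv_anti₀ h6 hna1
    calc ‖u‖⁻¹ * ‖Qe e u‖ ≤ (6 * Real.sqrt δ)⁻¹ * (4*δ) := by
          apply mul_le_mul this hQu (norm_nonneg _) (by positivity)
      _ = (2/3) * Real.sqrt δ := by
          field_simp
          nlinarith
  -- ‖Qe e' e‖ = ‖Qe e e'‖
  have hsym : ‖Qe e' e‖ = ‖Qe e e'‖ := by
    apply norm_eq_of_sq_eq (norm_nonneg _) (norm_nonneg _)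
    rw [Qe_norm_sq e' e he', Qe_norm_sq e e' he, he, he', real_inner_comm]
  -- lower bound ‖Qe e x‖
  have hkey : ‖Qe e' x‖ - ‖x‖ * ((2/3) * Real.sqrt δ) ≤ ‖Qe e x‖ := by
    have hdecomp : Qe e' (Qe e x) = Qe e' x - ⟪x, e⟫ • Qe e' e := by
      rw [show Qe e x = x - ⟪x, e⟫ • e from rfl, Qe_sub, Qe_smul]
    have hle : ‖Qe e' (Qe e x)‖ ≤ ‖Qe e x‖ := Qe_norm_le e' _ he'
    have htri : ‖Qe e' x‖ - |⟪x, e⟫| * ‖Qe e' e‖ ≤ ‖Qe e' (Qe e x)‖ := by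
      rw [hdecomp]
      have h5 := norm_sub_norm_le (Qe e' x) (⟪x, e⟫ • Qe e' e)
      rw [norm_smul, Real.norm_eq_abs] at h5
      linarith
    have hinner : |⟪x, e⟫| ≤ ‖x‖ := by
      have h6 := abs_real_inner_le_norm x e
      rw [he, mul_one] at h6
      exact h6
    have h7 : |⟪x, e⟫| * ‖Qe e' e‖ ≤ ‖x‖ * ((2/3) * Real.sqrt δ) := by
      apply mul_le_mul hinner (hsym ▸ hQe') (norm_nonneg _) (norm_nonneg _)
    linarith
  rw [projPerp_eq u x hu0, ← he'_def] at hna2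
  nlinarith [hkey, hQx4, hna2, mul_nonneg hsδ.le (norm_nonneg x)]

lemma continuous_bkv (k : Fin 3) : Continuous (bkv k) := by
  unfold bkv cross3
  refine (PiLp.continuous_toLp 2 _).comp ?_
  apply continuous_pi
  intro i
  fin_cases k <;> fin_cases i <;> simp [EuclideanSpace.single_apply] <;> fun_prop

lemma Fk_aemeasurable (χ : ℝ → ℝ) (hχcont : ContinuousOn χ (Set.Ici 0))
    (hχ_pos : ∀ r ≥ (0:ℝ), 0 < χ r) (γ : ℝ)
    (f : EuclideanSpace ℝ (Fin 3) → ℝ) (g : EuclideanSpace ℝ (Fin 3) → EuclideanSpace ℝ (Fin 3))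
    (hf : AEMeasurable f (volume : Measure (EuclideanSpace ℝ (Fin 3))))
    (hg : AEMeasurable g (volume : Measure (EuclideanSpace ℝ (Fin 3))))
    (k : Fin 3) :
    AEMeasurable (fun p : EuclideanSpace ℝ (Fin 3) × EuclideanSpace ℝ (Fin 3) =>
      ENNReal.ofReal (f p.1 * f p.2 * (χ ‖p.1 - p.2‖) ^ γ * (‖p.1 - p.2‖ ^ 2)⁻¹ *
        (⟪bkv k (p.1 - p.2), (f p.1)⁻¹ • g p.1⟫) ^ 4))
      ((volume : Measure (EuclideanSpace ℝ (Fin 3))).prod volume) := by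
  have h1 : AEMeasurable (fun p : EuclideanSpace ℝ (Fin 3) × EuclideanSpace ℝ (Fin 3) => f p.1)
      ((volume : Measure (EuclideanSpace ℝ (Fin 3))).prod volume) := hf.comp_fst
  have h2 : AEMeasurable (fun p : EuclideanSpace ℝ (Fin 3) × EuclideanSpace ℝ (Fin 3) => f p.2)
      ((volume : Measure (EuclideanSpace ℝ (Fin 3))).prod volume) := hf.comp_snd
  have hz : Continuous (fun p : EuclideanSpace ℝ (Fin 3) × EuclideanSpace ℝ (Fin 3) =>
      p.1 - p.2) := continuous_fst.sub continuous_snd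
  have h3 : Continuous (fun p : EuclideanSpace ℝ (Fin 3) × EuclideanSpace ℝ (Fin 3) =>
      (χ ‖p.1 - p.2‖) ^ γ) := by
    have hc : Continuous (fun p : EuclideanSpace ℝ (Fin 3) × EuclideanSpace ℝ (Fin 3) =>
        χ ‖p.1 - p.2‖) :=
      hχcont.comp_continuous hz.norm (fun p => norm_nonneg _)
    exact hc.rpow_const (fun p => Or.inl (ne_of_gt (hχ_pos _ (norm_nonneg _))))
  have h4 : Measurable (fun p : EuclideanSpace ℝ (Fin 3) × EuclideanSpace ℝ (Fin 3) =>
      (‖p.1 - p.2‖ ^ 2)⁻¹) := ((hz.norm.pow 2).measurable).inv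
  have h5 : AEMeasurable (fun p : EuclideanSpace ℝ (Fin 3) × EuclideanSpace ℝ (Fin 3) =>
      (⟪bkv k (p.1 - p.2), (f p.1)⁻¹ • g p.1⟫ : ℝ) ^ 4) ((volume : Measure (EuclideanSpace ℝ (Fin 3))).prod volume) := by
    have hξ : AEMeasurable (fun p : EuclideanSpace ℝ (Fin 3) × EuclideanSpace ℝ (Fin 3) =>
        (f p.1)⁻¹ • g p.1) ((volume : Measure (EuclideanSpace ℝ (Fin 3))).prod volume) := (h1.inv).smul hg.comp_fst
    have hb : Continuous (fun p : EuclideanSpace ℝ (Fin 3) × EuclideanSpace ℝ (Fin 3) =>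
        bkv k (p.1 - p.2)) := (continuous_bkv k).comp hz
    exact (((continuous_inner.measurable.comp_aemeasurable
      (hb.aemeasurable.prodMk hξ))).pow_const 4)
  exact ENNReal.measurable_ofReal.comp_aemeasurable
    ((((h1.mul h2).mul h3.aemeasurable).mul h4.aemeasurable).mul h5)

lemma pm3 (a b c : ℝ) : (a^2+b^2+c^2)^2 ≤ 3*(a^4+b^4+c^4) := by
  nlinarith [sq_nonneg (a^2-b^2), sq_nonneg (a^2-c^2), sq_nonneg (b^2-c^2)]

lemma corecalc (γ R δ s nz χz nξ q a0 a1 a2 : ℝ)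
    (hγ : γ ≤ 0) (hδ0 : 0 < δ) (hR : 0 < R) (hs1 : 1 ≤ s)
    (hq : δ/2 ≤ q) (hqz : q ≤ nz) (hz_up : nz ≤ (R+3)*s)
    (hχ_up : χz ≤ (R+3)*s) (hχ_pos : 0 < χz)
    (hsum2 : a0^2+a1^2+a2^2 = nξ^2 * q^2)
    (hnξ : 0 ≤ nξ) :
    (R+3)^(γ-(2:ℝ)) * δ^4/48 * (s^(γ-(2:ℝ)) * nξ^4)
      ≤ χz^γ * (nz^2)⁻¹ * (a0^4+a1^4+a2^4) := by
  have hs_pos : (0:ℝ) < s := by linarith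
  have hq_pos : (0:ℝ) < q := by linarith
  have hz_pos : (0:ℝ) < nz := by linarith
  have hRs_pos : (0:ℝ) < (R+3)*s := by positivity
  have hχγ : ((R+3) * s)^γ ≤ χz^γ := Real.rpow_le_rpow_of_nonpos hχ_pos hχ_up hγ
  have hinv : (((R+3) * s)^2)⁻¹ ≤ (nz^2)⁻¹ := by
    apply inv_anti₀ (by positivity)
    exact pow_le_pow_left₀ hz_pos.le hz_up 2
  have hpm : (a0^2+a1^2+a2^2)^2 ≤ 3*(a0^4+a1^4+a2^4) := pm3 a0 a1 a2
  have hsum4 : nξ^4 * δ^4/48 ≤ a0^4+a1^4+a2^4 := by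
    have h1 : (δ/2)^2 ≤ q^2 := by nlinarith
    have h2 : nξ^2*(δ/2)^2 ≤ nξ^2*q^2 := by nlinarith [sq_nonneg nξ]
    have h3 : (nξ^2*(δ/2)^2)^2 ≤ (nξ^2*q^2)^2 := by
      apply pow_le_pow_left₀ (by positivity) h2
    rw [← hsum2] at h3
    nlinarith [le_trans h3 hpm]
  have hfac : ((R+3) * s)^γ * (((R+3) * s)^2)⁻¹ ≤ χz^γ * (nz^2)⁻¹ :=
    mul_le_mul hχγ hinv (by positivity) (Real.rpow_nonneg hχ_pos.le _)
  have hrw : ((R+3) * s)^γ * (((R+3) * s)^2)⁻¹ = (R+3)^(γ-(2:ℝ)) * s^(γ-(2:ℝ)) := by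
    rw [← Real.mul_rpow (by linarith : (0:ℝ) ≤ R+3) hs_pos.le,
      show γ - (2:ℝ) = γ + (-2) by ring, Real.rpow_add hRs_pos]
    congr 1
    rw [Real.rpow_neg hRs_pos.le, show ((2:ℝ) : ℝ) = ((2:ℕ) : ℝ) by norm_num,
      Real.rpow_natCast]
  have hA_pos : (0:ℝ) ≤ (R+3)^(γ-(2:ℝ)) * s^(γ-(2:ℝ)) :=
    mul_nonneg (Real.rpow_nonneg (by linarith) _) (Real.rpow_nonneg hs_pos.le _)
  calc (R+3)^(γ-(2:ℝ)) * δ^4/48 * (s^(γ-(2:ℝ)) * nξ^4)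
      = ((R+3)^(γ-(2:ℝ)) * s^(γ-(2:ℝ))) * (nξ^4 * δ^4/48) := by ring
    _ ≤ (χz^γ * (nz^2)⁻¹) * (a0^4+a1^4+a2^4) := by
        apply mul_le_mul (hrw ▸ hfac) hsum4 (by positivity) ?_
        exact mul_nonneg (Real.rpow_nonneg hχ_pos.le _) (by positivity)

lemma corebound (γ : ℝ) (hγ : γ ≤ 0) (χ : ℝ → ℝ) (hχ_mono : MonotoneOn χ (Set.Ici 0))
    (hχ_pos : ∀ r ≥ (0:ℝ), 0 < χ r) (hχ_large : ∀ r ≥ (1:ℝ), χ r = r)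
    (δ R : ℝ) (hδ0 : 0 < δ) (hδ1 : δ < 1) (hR : 0 < R)
    (v w vj ξ : EuclideanSpace ℝ (Fin 3)) (hξ : ξ ≠ 0)
    (hvj : ‖vj‖ < R) (hw : ‖w - vj‖ ≤ 3*δ/2)
    (hQ : 2*δ ≤ ‖Qe (‖ξ‖⁻¹ • ξ) (vj - v)‖) :
    (R+3)^(γ-(2:ℝ)) * δ^4/48 * (Real.sqrt (1+‖v‖^2)^(γ-(2:ℝ)) * ‖ξ‖^4)
      ≤ (χ ‖v - w‖)^γ * (‖v - w‖^2)⁻¹ *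
        (⟪bkv 0 (v-w), ξ⟫^4 + ⟪bkv 1 (v-w), ξ⟫^4 + ⟪bkv 2 (v-w), ξ⟫^4) := by
  set e : EuclideanSpace ℝ (Fin 3) := ‖ξ‖⁻¹ • ξ with he_def
  have hξn : 0 < ‖ξ‖ := norm_pos_iff.mpr hξ
  have he : ‖e‖ = 1 := by
    rw [he_def, norm_smul, norm_inv, norm_norm, inv_mul_cancel₀ hξn.ne']
  have hs_sq : Real.sqrt (1+‖v‖^2)^2 = 1 + ‖v‖^2 := Real.sq_sqrt (by positivity)
  have hs_nonneg : 0 ≤ Real.sqrt (1+‖v‖^2) := Real.sqrt_nonneg _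
  have hs1 : 1 ≤ Real.sqrt (1+‖v‖^2) := by nlinarith [sq_nonneg ‖v‖]
  have hsv : ‖v‖ ≤ Real.sqrt (1+‖v‖^2) := by nlinarith [norm_nonneg v]
  -- lower bound on ‖Qe e (v-w)‖
  have hQz : δ/2 ≤ ‖Qe e (v - w)‖ := by
    have hzz : Qe e (v - w) = Qe e (vj - w) - Qe e (vj - v) := by
      rw [← Qe_sub]; congr 1; abel
    have h1 : ‖Qe e (vj - w)‖ ≤ 3*δ/2 := by
      calc ‖Qe e (vj - w)‖ ≤ ‖vj - w‖ := Qe_norm_le e _ he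
        _ = ‖w - vj‖ := by rw [norm_sub_rev]
        _ ≤ 3*δ/2 := hw
    have h2 : ‖Qe e (vj - v)‖ - ‖Qe e (vj - w)‖ ≤ ‖Qe e (v - w)‖ := by
      rw [hzz]
      have h3 := norm_sub_norm_le (Qe e (vj - v)) (Qe e (vj - w))
      have h4 : ‖Qe e (vj - v) - Qe e (vj - w)‖ = ‖Qe e (vj - w) - Qe e (vj - v)‖ :=
        norm_sub_rev _ _
      linarith
    linarith
  have hqz : ‖Qe e (v - w)‖ ≤ ‖v - w‖ := Qe_norm_le e _ he
  -- upper bound on ‖v - w‖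
  have hz_up : ‖v - w‖ ≤ (R+3) * Real.sqrt (1+‖v‖^2) := by
    have h1 : ‖v - w‖ ≤ ‖v‖ + ‖w‖ := norm_sub_le v w
    have h2 : ‖w‖ ≤ ‖w - vj‖ + ‖vj‖ := by
      have := norm_add_le (w - vj) vj; simpa using this
    have h6 : (R+2)*1 ≤ (R+2)*Real.sqrt (1+‖v‖^2) :=
      mul_le_mul_of_nonneg_left hs1 (by linarith)
    have h7 : (R+3)*Real.sqrt (1+‖v‖^2)
        = Real.sqrt (1+‖v‖^2) + (R+2)*Real.sqrt (1+‖v‖^2) := by ring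
    linarith
  -- upper bound on χ ‖v-w‖
  have hχ_up : χ ‖v - w‖ ≤ (R+3) * Real.sqrt (1+‖v‖^2) := by
    rcases le_or_gt ‖v - w‖ 1 with hle | hgt
    · have hm := hχ_mono (Set.mem_Ici.mpr (norm_nonneg (v-w))) (Set.mem_Ici.mpr zero_le_one) hle
      have h1 : χ 1 = 1 := hχ_large 1 le_rfl
      have h2 : (R+3)*1 ≤ (R+3)*Real.sqrt (1+‖v‖^2) :=
        mul_le_mul_of_nonneg_left hs1 (by linarith)
      linarith
    · rw [hχ_large ‖v - w‖ hgt.le]; exact hz_up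
  have hsum2 : ⟪bkv 0 (v-w), ξ⟫^2 + ⟪bkv 1 (v-w), ξ⟫^2 + ⟪bkv 2 (v-w), ξ⟫^2
      = ‖ξ‖^2 * ‖Qe e (v - w)‖^2 := by
    rw [lagrange, Qe_norm_sq e (v - w) he]
    have hze : ⟪v - w, ξ⟫ = ‖ξ‖ * ⟪v - w, e⟫ := by
      rw [he_def, real_inner_smul_right]
      field_simp
    rw [hze]
    ring
  exact corecalc γ R δ (Real.sqrt (1+‖v‖^2)) ‖v - w‖ (χ ‖v - w‖) ‖ξ‖ ‖Qe e (v - w)‖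
    _ _ _ hγ hδ0 hR hs1 hQz hqz hz_up hχ_up (hχ_pos _ (norm_nonneg _)) hsum2 hξn.le

lemma ofReal_sum3_ge {K hw fw T0 T1 T2 : ℝ} (hK0 : 0 ≤ K)
    (hle : K * (hw * fw) ≤ T0 + T1 + T2) :
    ENNReal.ofReal K * ENNReal.ofReal (hw * fw)
      ≤ ENNReal.ofReal T0 + ENNReal.ofReal T1 + ENNReal.ofReal T2 := by
  calc ENNReal.ofReal K * ENNReal.ofReal (hw * fw)
      = ENNReal.ofReal (K * (hw * fw)) := (ENNReal.ofReal_mul hK0).symm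
    _ ≤ ENNReal.ofReal (T0 + T1 + T2) := ENNReal.ofReal_le_ofReal hle
    _ ≤ ENNReal.ofReal T0 + ENNReal.ofReal T1 + ENNReal.ofReal T2 :=
        le_trans ENNReal.ofReal_add_le (add_le_add ENNReal.ofReal_add_le le_rfl)


theorem stmt5 (γ : ℝ) (hγ : γ ∈ Set.Icc (-3 : ℝ) (-2))
    -- the cut-off profile χ (defining ᾱ(r) = χ(r)^γ)
    (χ : ℝ → ℝ)
    (hχ_smooth : ContDiffOn ℝ (⊤ : ℕ∞) χ (Set.Ici 0))
    (hχ_mono : MonotoneOn χ (Set.Ici 0))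
    (hχ_pos : ∀ r ≥ (0:ℝ), 0 < χ r)
    (hχ_small : ∀ r ∈ Set.Icc (0:ℝ) (1/2), χ r = 0.99)
    (hχ_large : ∀ r ≥ (1:ℝ), χ r = r)
    (hχ_lip : LipschitzOnWith 1 χ (Set.Ici 0))
    (hχ_ge : ∀ r ≥ (0:ℝ), r ≤ χ r)
    -- the bump function h
    (h : EuclideanSpace ℝ (Fin 3) → ℝ)
    (hh_smooth : ContDiff ℝ (⊤ : ℕ∞) h)
    (hh_range : ∀ x, h x ∈ Set.Icc (0:ℝ) 1)
    (hh_one : ∀ x ∈ Metric.ball (0 : EuclideanSpace ℝ (Fin 3)) 1, h x = 1)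
    (hh_zero : ∀ x ∉ Metric.ball (0 : EuclideanSpace ℝ (Fin 3)) (3/2), h x = 0)
    (δ R : ℝ) (hδ : δ ∈ Set.Ioo (0:ℝ) 1) (hR : 0 < R) :
    ∃ c > (0:ℝ),
      ∀ (f : EuclideanSpace ℝ (Fin 3) → ℝ)
        (g : EuclideanSpace ℝ (Fin 3) → EuclideanSpace ℝ (Fin 3)),
        -- f is a probability density, positive a.e., in W^{1,1}_loc with weak gradient g
        (∀ v, 0 ≤ f v) →
        (∀ᵐ v, 0 < f v) →
        (∫⁻ v, ENNReal.ofReal (f v) = 1) →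
        LocallyIntegrable f volume →
        LocallyIntegrable g volume →
        (∀ φ : EuclideanSpace ℝ (Fin 3) → ℝ, ContDiff ℝ (⊤ : ℕ∞) φ → HasCompactSupport φ →
          ∫ v, f v • gradient φ v = - ∫ v, φ v • g v) →
        ∀ (v₁ v₂ v₃ : EuclideanSpace ℝ (Fin 3)),
          v₁ ∈ Metric.ball (0 : EuclideanSpace ℝ (Fin 3)) R →
          v₂ ∈ Metric.ball (0 : EuclideanSpace ℝ (Fin 3)) R →
          v₃ ∈ Metric.ball (0 : EuclideanSpace ℝ (Fin 3)) R →
          DeltaNonAligned δ v₁ v₂ v₃ →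
          ENNReal.ofReal c *
            (min (∫⁻ w, ENNReal.ofReal (h (δ⁻¹ • (w - v₁)) * f w))
              (min (∫⁻ w, ENNReal.ofReal (h (δ⁻¹ • (w - v₂)) * f w))
                   (∫⁻ w, ENNReal.ofReal (h (δ⁻¹ • (w - v₃)) * f w)))) *
            (∫⁻ v, ENNReal.ofReal
              (f v * Real.sqrt (1 + ‖v‖ ^ 2) ^ (γ - 2) * ‖(f v)⁻¹ • g v‖ ^ 4))
          ≤ ∑ k : Fin 3,
              ∫⁻ p : EuclideanSpace ℝ (Fin 3) × EuclideanSpace ℝ (Fin 3),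
                ENNReal.ofReal (f p.1 * f p.2 *
                  (χ ‖p.1 - p.2‖) ^ γ * (‖p.1 - p.2‖ ^ 2)⁻¹ *
                  (⟪bkv k (p.1 - p.2), (f p.1)⁻¹ • g p.1⟫) ^ 4) := by
  obtain ⟨hγl, hγr⟩ := hγ
  obtain ⟨hδ0, hδ1⟩ := hδ
  refine ⟨(R+3)^(γ-(2:ℝ)) * δ^4/48, by positivity, ?_⟩
  intro f g hf0 hfpos hfint hfloc hgloc hweak v₁ v₂ v₃ hv₁ hv₂ hv₃ hna
  have hγ0 : γ ≤ 0 := by linarith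
  set c : ℝ := (R+3)^(γ-(2:ℝ)) * δ^4/48 with hc_def
  have hc : 0 < c := by rw [hc_def]; positivity
  set m1 := ∫⁻ w, ENNReal.ofReal (h (δ⁻¹ • (w - v₁)) * f w) with hm1_def
  set m2 := ∫⁻ w, ENNReal.ofReal (h (δ⁻¹ • (w - v₂)) * f w) with hm2_def
  set m3 := ∫⁻ w, ENNReal.ofReal (h (δ⁻¹ • (w - v₃)) * f w) with hm3_def
  set M := min m1 (min m2 m3) with hM_def
  have hm1_le : m1 ≤ 1 := by
    rw [hm1_def, ← hfint]
    apply lintegral_mono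
    intro w
    apply ENNReal.ofReal_le_ofReal
    exact mul_le_of_le_one_left (hf0 w) (hh_range _).2
  have hM_ne : M ≠ ⊤ :=
    ne_top_of_le_ne_top ENNReal.one_ne_top (le_trans (min_le_left _ _) hm1_le)
  have hcM_ne : ENNReal.ofReal c * M ≠ ⊤ :=
    ENNReal.mul_ne_top ENNReal.ofReal_ne_top hM_ne
  have hfm : AEMeasurable f (volume : Measure (EuclideanSpace ℝ (Fin 3))) :=
    hfloc.aestronglyMeasurable.aemeasurable
  have hgm : AEMeasurable g (volume : Measure (EuclideanSpace ℝ (Fin 3))) :=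
    hgloc.aestronglyMeasurable.aemeasurable
  have haem : ∀ k : Fin 3,
      AEMeasurable (fun p : EuclideanSpace ℝ (Fin 3) × EuclideanSpace ℝ (Fin 3) =>
        ENNReal.ofReal (f p.1 * f p.2 * (χ ‖p.1 - p.2‖) ^ γ * (‖p.1 - p.2‖ ^ 2)⁻¹ *
          (⟪bkv k (p.1 - p.2), (f p.1)⁻¹ • g p.1⟫) ^ 4))
      ((volume : Measure (EuclideanSpace ℝ (Fin 3))).prod volume) :=
    fun k => Fk_aemeasurable χ (hχ_smooth.continuousOn) hχ_pos γ f g hfm hgm k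
  set G : EuclideanSpace ℝ (Fin 3) × EuclideanSpace ℝ (Fin 3) → ℝ≥0∞ := fun p =>
    ENNReal.ofReal (f p.1 * f p.2 * (χ ‖p.1 - p.2‖) ^ γ * (‖p.1 - p.2‖ ^ 2)⁻¹ *
      (⟪bkv 0 (p.1 - p.2), (f p.1)⁻¹ • g p.1⟫) ^ 4) +
    ENNReal.ofReal (f p.1 * f p.2 * (χ ‖p.1 - p.2‖) ^ γ * (‖p.1 - p.2‖ ^ 2)⁻¹ *
      (⟪bkv 1 (p.1 - p.2), (f p.1)⁻¹ • g p.1⟫) ^ 4) +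
    ENNReal.ofReal (f p.1 * f p.2 * (χ ‖p.1 - p.2‖) ^ γ * (‖p.1 - p.2‖ ^ 2)⁻¹ *
      (⟪bkv 2 (p.1 - p.2), (f p.1)⁻¹ • g p.1⟫) ^ 4) with hG_def
  have hGm : AEMeasurable G
      ((volume : Measure (EuclideanSpace ℝ (Fin 3))).prod volume) :=
    ((haem 0).add (haem 1)).add (haem 2)
  have key : ∀ v, (ENNReal.ofReal c * M) *
      ENNReal.ofReal (f v * Real.sqrt (1 + ‖v‖ ^ 2) ^ (γ - 2) * ‖(f v)⁻¹ • g v‖ ^ 4)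
      ≤ ∫⁻ w, G (v, w) := by
    intro v
    by_cases hgv : (f v)⁻¹ • g v = 0
    · have h0 : f v * Real.sqrt (1 + ‖v‖ ^ 2) ^ (γ - 2) * ‖(f v)⁻¹ • g v‖ ^ 4 = 0 := by
        rw [hgv]; simp
      rw [h0, ENNReal.ofReal_zero, mul_zero]
      exact zero_le
    · have hξn : 0 < ‖(f v)⁻¹ • g v‖ := norm_pos_iff.mpr hgv
      set e : EuclideanSpace ℝ (Fin 3) := ‖(f v)⁻¹ • g v‖⁻¹ • ((f v)⁻¹ • g v) with he_def
      have he : ‖e‖ = 1 := by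
        rw [he_def, norm_smul, norm_inv, norm_norm, inv_mul_cancel₀ hξn.ne']
      have main : ∀ (vj : EuclideanSpace ℝ (Fin 3)) (mj : ℝ≥0∞), ‖vj‖ < R →
          2*δ ≤ ‖Qe e (vj - v)‖ → M ≤ mj →
          mj = ∫⁻ w, ENNReal.ofReal (h (δ⁻¹ • (w - vj)) * f w) →
          (ENNReal.ofReal c * M) *
            ENNReal.ofReal (f v * Real.sqrt (1 + ‖v‖ ^ 2) ^ (γ - 2) * ‖(f v)⁻¹ • g v‖ ^ 4)
            ≤ ∫⁻ w, G (v, w) := by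
        intro vj mj hvjR hQ hMle hmj
        have hK0 : 0 ≤ c * (f v * Real.sqrt (1 + ‖v‖ ^ 2) ^ (γ - 2) * ‖(f v)⁻¹ • g v‖ ^ 4) := by
          have hfv := hf0 v
          exact mul_nonneg hc.le (by positivity)
        have hpt : ∀ w, ENNReal.ofReal
              (c * (f v * Real.sqrt (1 + ‖v‖ ^ 2) ^ (γ - 2) * ‖(f v)⁻¹ • g v‖ ^ 4)) *
            ENNReal.ofReal (h (δ⁻¹ • (w - vj)) * f w) ≤ G (v, w) := by
          intro w
          rcases lt_or_ge ‖w - vj‖ (3*δ/2) with hsmall | hbig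
          · have hcore := corebound γ hγ0 χ hχ_mono hχ_pos hχ_large δ R hδ0 hδ1 hR
              v w vj ((f v)⁻¹ • g v) hgv hvjR hsmall.le hQ
            rw [← hc_def] at hcore
            have hh1 := (hh_range (δ⁻¹ • (w - vj))).2
            have hfvw : (0:ℝ) ≤ f v * f w := mul_nonneg (hf0 v) (hf0 w)
            have hstep1 : c * (f v * Real.sqrt (1 + ‖v‖ ^ 2) ^ (γ - 2) * ‖(f v)⁻¹ • g v‖ ^ 4) *
                (h (δ⁻¹ • (w - vj)) * f w)
                ≤ c * (f v * Real.sqrt (1 + ‖v‖ ^ 2) ^ (γ - 2) * ‖(f v)⁻¹ • g v‖ ^ 4) * f w :=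
              mul_le_mul_of_nonneg_left (mul_le_of_le_one_left (hf0 w) hh1) hK0
            have hstep2 : c * (f v * Real.sqrt (1 + ‖v‖ ^ 2) ^ (γ - 2) * ‖(f v)⁻¹ • g v‖ ^ 4) * f w
                ≤ f v * f w * ((χ ‖v - w‖) ^ γ * (‖v - w‖ ^ 2)⁻¹ *
                  (⟪bkv 0 (v-w), (f v)⁻¹ • g v⟫^4 + ⟪bkv 1 (v-w), (f v)⁻¹ • g v⟫^4 +
                   ⟪bkv 2 (v-w), (f v)⁻¹ • g v⟫^4)) := by
              have h9 : c * (f v * Real.sqrt (1 + ‖v‖ ^ 2) ^ (γ - 2) * ‖(f v)⁻¹ • g v‖ ^ 4) * f w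
                  = (f v * f w) *
                    (c * (Real.sqrt (1+‖v‖^2)^(γ-(2:ℝ)) * ‖(f v)⁻¹ • g v‖^4)) := by ring
              rw [h9]
              exact mul_le_mul_of_nonneg_left hcore hfvw
            have h10 : f v * f w * ((χ ‖v - w‖) ^ γ * (‖v - w‖ ^ 2)⁻¹ *
                  (⟪bkv 0 (v-w), (f v)⁻¹ • g v⟫^4 + ⟪bkv 1 (v-w), (f v)⁻¹ • g v⟫^4 +
                   ⟪bkv 2 (v-w), (f v)⁻¹ • g v⟫^4))
                = f v * f w * (χ ‖v - w‖) ^ γ * (‖v - w‖ ^ 2)⁻¹ *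
                    (⟪bkv 0 (v-w), (f v)⁻¹ • g v⟫) ^ 4
                + f v * f w * (χ ‖v - w‖) ^ γ * (‖v - w‖ ^ 2)⁻¹ *
                    (⟪bkv 1 (v-w), (f v)⁻¹ • g v⟫) ^ 4
                + f v * f w * (χ ‖v - w‖) ^ γ * (‖v - w‖ ^ 2)⁻¹ *
                    (⟪bkv 2 (v-w), (f v)⁻¹ • g v⟫) ^ 4 := by ring
            have hreal : c * (f v * Real.sqrt (1 + ‖v‖ ^ 2) ^ (γ - 2) * ‖(f v)⁻¹ • g v‖ ^ 4) *
                (h (δ⁻¹ • (w - vj)) * f w)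
                ≤ f v * f w * (χ ‖v - w‖) ^ γ * (‖v - w‖ ^ 2)⁻¹ *
                    (⟪bkv 0 (v-w), (f v)⁻¹ • g v⟫) ^ 4
                + f v * f w * (χ ‖v - w‖) ^ γ * (‖v - w‖ ^ 2)⁻¹ *
                    (⟪bkv 1 (v-w), (f v)⁻¹ • g v⟫) ^ 4
                + f v * f w * (χ ‖v - w‖) ^ γ * (‖v - w‖ ^ 2)⁻¹ *
                    (⟪bkv 2 (v-w), (f v)⁻¹ • g v⟫) ^ 4 := by
              linarith [hstep1, hstep2, h10]
            exact ofReal_sum3_ge hK0 hreal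
          · have hnb : δ⁻¹ • (w - vj) ∉ Metric.ball (0 : EuclideanSpace ℝ (Fin 3)) (3/2) := by
              simp only [Metric.mem_ball, dist_zero_right, not_lt]
              rw [norm_smul, Real.norm_eq_abs, abs_of_pos (inv_pos.mpr hδ0)]
              have h11 : δ⁻¹ * (3*δ/2) ≤ δ⁻¹ * ‖w - vj‖ :=
                mul_le_mul_of_nonneg_left hbig (inv_pos.mpr hδ0).le
              have h12 : δ⁻¹ * (3*δ/2) = 3/2 := by field_simp
              linarith
            rw [hh_zero _ hnb, zero_mul, ENNReal.ofReal_zero, mul_zero]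
            exact zero_le
        calc (ENNReal.ofReal c * M) *
            ENNReal.ofReal (f v * Real.sqrt (1 + ‖v‖ ^ 2) ^ (γ - 2) * ‖(f v)⁻¹ • g v‖ ^ 4)
            = ENNReal.ofReal
                (c * (f v * Real.sqrt (1 + ‖v‖ ^ 2) ^ (γ - 2) * ‖(f v)⁻¹ • g v‖ ^ 4)) * M := by
              rw [ENNReal.ofReal_mul hc.le]; ring
          _ ≤ ENNReal.ofReal
                (c * (f v * Real.sqrt (1 + ‖v‖ ^ 2) ^ (γ - 2) * ‖(f v)⁻¹ • g v‖ ^ 4)) * mj :=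
              mul_le_mul_right hMle _
          _ = ENNReal.ofReal
                (c * (f v * Real.sqrt (1 + ‖v‖ ^ 2) ^ (γ - 2) * ‖(f v)⁻¹ • g v‖ ^ 4)) *
              ∫⁻ w, ENNReal.ofReal (h (δ⁻¹ • (w - vj)) * f w) := by rw [hmj]
          _ = ∫⁻ w, ENNReal.ofReal
                (c * (f v * Real.sqrt (1 + ‖v‖ ^ 2) ^ (γ - 2) * ‖(f v)⁻¹ • g v‖ ^ 4)) *
              ENNReal.ofReal (h (δ⁻¹ • (w - vj)) * f w) :=
              (lintegral_const_mul' _ _ ENNReal.ofReal_ne_top).symm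
          _ ≤ ∫⁻ w, G (v, w) := lintegral_mono hpt
      rcases exists_far hδ0 e v v₁ v₂ v₃ he hna with hj | hj | hj
      · exact main v₁ m1 (mem_ball_zero_iff.mp hv₁) hj (min_le_left _ _) hm1_def
      · exact main v₂ m2 (mem_ball_zero_iff.mp hv₂) hj
          (le_trans (min_le_right _ _) (min_le_left _ _)) hm2_def
      · exact main v₃ m3 (mem_ball_zero_iff.mp hv₃) hj
          (le_trans (min_le_right _ _) (min_le_right _ _)) hm3_def
  calc ENNReal.ofReal c * M *
      ∫⁻ v, ENNReal.ofReal (f v * Real.sqrt (1 + ‖v‖ ^ 2) ^ (γ - 2) * ‖(f v)⁻¹ • g v‖ ^ 4)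
      = ∫⁻ v, (ENNReal.ofReal c * M) *
          ENNReal.ofReal (f v * Real.sqrt (1 + ‖v‖ ^ 2) ^ (γ - 2) * ‖(f v)⁻¹ • g v‖ ^ 4) :=
        (lintegral_const_mul' _ _ hcM_ne).symm
    _ ≤ ∫⁻ v, ∫⁻ w, G (v, w) := lintegral_mono key
    _ = ∫⁻ p, G p ∂((volume : Measure (EuclideanSpace ℝ (Fin 3))).prod volume) :=
        (MeasureTheory.lintegral_prod G hGm).symm
    _ = (∫⁻ p : EuclideanSpace ℝ (Fin 3) × EuclideanSpace ℝ (Fin 3),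
          ENNReal.ofReal (f p.1 * f p.2 * (χ ‖p.1 - p.2‖) ^ γ * (‖p.1 - p.2‖ ^ 2)⁻¹ *
            (⟪bkv 0 (p.1 - p.2), (f p.1)⁻¹ • g p.1⟫) ^ 4)
          ∂((volume : Measure (EuclideanSpace ℝ (Fin 3))).prod volume))
        + (∫⁻ p : EuclideanSpace ℝ (Fin 3) × EuclideanSpace ℝ (Fin 3),
          ENNReal.ofReal (f p.1 * f p.2 * (χ ‖p.1 - p.2‖) ^ γ * (‖p.1 - p.2‖ ^ 2)⁻¹ *
            (⟪bkv 1 (p.1 - p.2), (f p.1)⁻¹ • g p.1⟫) ^ 4)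
          ∂((volume : Measure (EuclideanSpace ℝ (Fin 3))).prod volume))
        + (∫⁻ p : EuclideanSpace ℝ (Fin 3) × EuclideanSpace ℝ (Fin 3),
          ENNReal.ofReal (f p.1 * f p.2 * (χ ‖p.1 - p.2‖) ^ γ * (‖p.1 - p.2‖ ^ 2)⁻¹ *
            (⟪bkv 2 (p.1 - p.2), (f p.1)⁻¹ • g p.1⟫) ^ 4)
          ∂((volume : Measure (EuclideanSpace ℝ (Fin 3))).prod volume)) := by
        rw [hG_def]
        exact (lintegral_add_left' ((haem 0).add (haem 1)) _).trans
          (congrArg (· + _) (lintegral_add_left' (haem 0) _))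
    _ = ∑ k : Fin 3,
          ∫⁻ p : EuclideanSpace ℝ (Fin 3) × EuclideanSpace ℝ (Fin 3),
            ENNReal.ofReal (f p.1 * f p.2 *
              (χ ‖p.1 - p.2‖) ^ γ * (‖p.1 - p.2‖ ^ 2)⁻¹ *
              (⟪bkv k (p.1 - p.2), (f p.1)⁻¹ • g p.1⟫) ^ 4) := by
        rw [Fin.sum_univ_three, MeasureTheory.Measure.volume_eq_prod]

end
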